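/- Let Λ be a Bedford–McMullen carpet with non-uniform vertical fibres and let t ∈ (t̲, t̄). Then the infimum of H(p‖P) over p ∈ G_t and the infimum of H(q‖Q) over q ∈ F_t are both attained; every minimizer of either problem lies in E_t; and the two minimum values satisfy inf_{p∈G_t} H(p‖P) = inf_{q∈F_t} H(q‖Q) + log(N/M) − t. -/
import Mathlib


open Filter Set MeasureTheory
open scoped ENNReal NNReal Topology

noncomputable section

/-- The data defining a Bedford–McMullen carpet: an `m × n` grid with `n > m ≥ 2` and a
nonempty set `A` of selected rectangles, with more than one nonempty column. -/
structure BMData where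
  m : ℕ
  n : ℕ
  two_le_m : 2 ≤ m
  m_lt_n : m < n
  A : Finset (Fin m × Fin n)
  A_nonempty : A.Nonempty
  one_lt_cols : 1 < (A.image Prod.fst).card

namespace BMData

variable (C : BMData)

/-- The affine contraction `f_{(i,j)}` associated to a selected rectangle `(i, j) ∈ A`
(with the grid indexed from `0` rather than from `1`). -/
def map (p : Fin C.m × Fin C.n) (x : ℝ × ℝ) : ℝ × ℝ :=
  (x.1 / C.m + (p.1 : ℝ) / C.m, x.2 / C.n + (p.2 : ℝ) / C.n)

/-- `Λ` is the attractor of the iterated function system: the unique nonempty compact set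
satisfying `Λ = ⋃_{p ∈ A} f_p(Λ)`. -/
def IsAttractor (Λ : Set (ℝ × ℝ)) : Prop :=
  Λ.Nonempty ∧ IsCompact Λ ∧ Λ = ⋃ p ∈ C.A, C.map p '' Λ

/-- The (finite set of) nonempty columns. -/
def cols : Finset (Fin C.m) := C.A.image Prod.fst

/-- `M`, the number of nonempty columns. -/
def M : ℕ := C.cols.card

/-- `N`, the total number of maps. -/
def N : ℕ := C.A.card

/-- The number `N_î` of maps in column `î`. -/
def colCount (i : Fin C.m) : ℕ := (C.A.filter fun p => p.1 = i).card

/-- Non-uniform vertical fibres: the column counts are not all equal. -/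
def NonUniform : Prop :=
  ∃ i ∈ C.cols, ∃ j ∈ C.cols, C.colCount i ≠ C.colCount j

/-- `γ = log n / log m`. -/
def gamma : ℝ := Real.log C.n / Real.log C.m

/-- `t̲ = (1/M) ∑_ĵ log N_ĵ`. -/
def tLow : ℝ := (1 / (C.M : ℝ)) * ∑ j ∈ C.cols, Real.log (C.colCount j)

/-- `t̄ = ∑_ĵ (N_ĵ/N) log N_ĵ`. -/
def tUp : ℝ := ∑ j ∈ C.cols, ((C.colCount j : ℝ) / (C.N : ℝ)) * Real.log (C.colCount j)

/-- The large deviations rate function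
`I(t) = sup_λ (λt − log((1/M) ∑_ĵ N_ĵ^λ))`. -/
def rate (t : ℝ) : ℝ :=
  ⨆ l : ℝ, (l * t - Real.log ((1 / (C.M : ℝ)) * ∑ j ∈ C.cols, (C.colCount j : ℝ) ^ l))

/-- The map `T_s(t) = (s − log M/log m)·log n + γ·I(t)`. -/
def T (s t : ℝ) : ℝ :=
  (s - Real.log C.M / Real.log C.m) * Real.log C.n + C.gamma * C.rate t

/-- The sequence `t_ℓ(s)`, shifted so that `t_L(s) = tseq s (L - 1)`:
`tseq s 0 = t_1(s) = (s − log M/log m)·log n` and `tseq s (k+1) = T_s (tseq s k)`. -/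
def tseq (s : ℝ) : ℕ → ℝ
  | 0 => (s - Real.log C.M / Real.log C.m) * Real.log C.n
  | k + 1 => C.T s (tseq s k)

/-- The Hausdorff dimension of the carpet (Bedford–McMullen formula). -/
def dimH : ℝ :=
  (1 / Real.log C.m) *
    Real.log (∑ j ∈ C.cols, (C.colCount j : ℝ) ^ (Real.log C.m / Real.log C.n))

/-- The box dimension of the carpet (Bedford–McMullen formula). -/
def dimB : ℝ :=
  Real.log C.N / Real.log C.n + (1 - Real.log C.m / Real.log C.n) * (Real.log C.M / Real.log C.m)

/-- `(M₀, Ñ_1 > ⋯ > Ñ_{M₀}, R_1, …, R_{M₀})` are the parameters of the carpet: `Ñ` lists the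
distinct values among the column counts in strictly decreasing order, and `R î` is the number
of nonempty columns whose count equals `Ñ î`. -/
def HasParams (M0 : ℕ) (Nt R : Fin M0 → ℕ) : Prop :=
  (∀ i j : Fin M0, i < j → Nt j < Nt i) ∧
  (∀ i : Fin M0, 0 < R i) ∧
  (∀ c ∈ C.cols, ∃ i : Fin M0, C.colCount c = Nt i) ∧
  (∀ i : Fin M0, R i = (C.cols.filter fun c => C.colCount c = Nt i).card)

/-- `ψ_{ī|k}(s) = M^{kγ}·n^{−sk}·∏_{ℓ=1}^k N_{i_ℓ}` for a word `ī` of length `J` over the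
alphabet of nonempty columns. -/
def psi (s : ℝ) {J : ℕ} (w : Fin J → {c // c ∈ C.cols}) (k : ℕ) : ℝ :=
  (C.M : ℝ) ^ ((k : ℝ) * C.gamma) * (C.n : ℝ) ^ (-(s * (k : ℝ))) *
    ∏ l ∈ Finset.univ.filter (fun l : Fin J => (l : ℕ) < k), (C.colCount (w l).1 : ℝ)

/-- `Ψ_J(s) = ∑_{ī} min_{0 ≤ k ≤ J} ψ_{ī|k}(s)`. -/
def Psi (J : ℕ) (s : ℝ) : ℝ :=
  ∑ w : Fin J → {c // c ∈ C.cols}, ⨅ k : Fin (J + 1), C.psi s w (k : ℕ)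

open Classical in
/-- `∑_{ī : ψ_{ī|J}(s) ≤ 1} ψ_{ī|J}(s)`. -/
def psiSumLe (s : ℝ) (J : ℕ) : ℝ :=
  ∑ w : Fin J → {c // c ∈ C.cols}, if C.psi s w J ≤ 1 then C.psi s w J else 0

/-- `H(Q*_t)`: the maximal entropy of a probability vector `q` on the nonempty columns
subject to `∑_ĵ q_ĵ log N_ĵ = t`. -/
def entMax (t : ℝ) : ℝ :=
  sSup { h : ℝ | ∃ q : Fin C.m → ℝ, (∀ j, 0 ≤ q j) ∧ (∀ j ∉ C.cols, q j = 0) ∧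
    (∑ j ∈ C.cols, q j) = 1 ∧ (∑ j ∈ C.cols, q j * Real.log (C.colCount j)) = t ∧
    h = -∑ j ∈ C.cols, q j * Real.log (q j) }

/-- A probability vector on the nonempty columns. -/
def IsProbVec (p : Fin C.m → ℝ) : Prop :=
  (∀ j, 0 ≤ p j) ∧ (∀ j ∉ C.cols, p j = 0) ∧ (∑ j ∈ C.cols, p j) = 1

/-- `∑_ĵ p_ĵ log N_ĵ`. -/
def colAvg (p : Fin C.m → ℝ) : ℝ := ∑ j ∈ C.cols, p j * Real.log (C.colCount j)

/-- The relative entropy `H(p‖P)` where `P = (N_1/N, …, N_M/N)`. -/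
def relEntP (p : Fin C.m → ℝ) : ℝ :=
  ∑ j ∈ C.cols, p j * Real.log (p j / ((C.colCount j : ℝ) / (C.N : ℝ)))

/-- The relative entropy `H(p‖Q)` where `Q = (1/M, …, 1/M)`. -/
def relEntQ (p : Fin C.m → ℝ) : ℝ :=
  ∑ j ∈ C.cols, p j * Real.log (p j / (1 / (C.M : ℝ)))

/-- The function `β(ξ)` of the multifractal spectrum of the uniform self-affine measure. -/
def beta (ξ : ℝ) : ℝ :=
  (1 / Real.log C.m) * (-(ξ * Real.log C.N) +
    Real.log (∑ j ∈ C.cols, (C.colCount j : ℝ) ^ (C.gamma⁻¹ + (1 - C.gamma⁻¹) * ξ)))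

/-- `f(α) = inf_ξ (αξ + β(ξ))`. -/
def fspec (α : ℝ) : ℝ := ⨅ ξ : ℝ, (α * ξ + C.beta ξ)

end BMData

/-- The lower `θ`-intermediate dimension of a set in a metric space. -/
def lowerInterDim {X : Type*} [MetricSpace X] (θ : ℝ) (F : Set X) : ℝ :=
  sInf { s : ℝ | 0 ≤ s ∧ ∀ ε > 0, ∀ δ₀ > 0, ∃ δ : ℝ, 0 < δ ∧ δ ≤ δ₀ ∧
    ∃ 𝒰 : Set (Set X), 𝒰.Countable ∧ F ⊆ ⋃₀ 𝒰 ∧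
      (∀ U ∈ 𝒰, δ ^ (1 / θ) ≤ Metric.diam U ∧ Metric.diam U ≤ δ) ∧
      (∑' U : 𝒰, ENNReal.ofReal (Metric.diam (U : Set X) ^ s)) ≤ ENNReal.ofReal ε }

/-- The upper `θ`-intermediate dimension of a set in a metric space. -/
def upperInterDim {X : Type*} [MetricSpace X] (θ : ℝ) (F : Set X) : ℝ :=
  sInf { s : ℝ | 0 ≤ s ∧ ∀ ε > 0, ∃ δ₀ > 0, ∀ δ : ℝ, 0 < δ → δ ≤ δ₀ →
    ∃ 𝒰 : Set (Set X), 𝒰.Countable ∧ F ⊆ ⋃₀ 𝒰 ∧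
      (∀ U ∈ 𝒰, δ ^ (1 / θ) ≤ Metric.diam U ∧ Metric.diam U ≤ δ) ∧
      (∑' U : 𝒰, ENNReal.ofReal (Metric.diam (U : Set X) ^ s)) ≤ ENNReal.ofReal ε }

/-- The topological support of a Borel measure: the set of points all of whose
neighbourhoods have positive measure. -/
def measSupport {X : Type*} [MetricSpace X] [MeasurableSpace X] (μ : Measure X) : Set X :=
  { x | ∀ r : ℝ, 0 < r → 0 < μ (Metric.ball x r) }

/-- `S^s_{δ,θ}(F)`: the infimal `s`-cost of a countable cover of `F` by sets of diameter
between `δ^{1/θ}` and `δ`. -/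
def interCost {X : Type*} [MetricSpace X] (F : Set X) (θ s δ : ℝ) : ℝ≥0∞ :=
  sInf { c : ℝ≥0∞ | ∃ 𝒰 : Set (Set X), 𝒰.Countable ∧ F ⊆ ⋃₀ 𝒰 ∧
    (∀ U ∈ 𝒰, δ ^ (1 / θ) ≤ Metric.diam U ∧ Metric.diam U ≤ δ) ∧
    c = ∑' U : 𝒰, ENNReal.ofReal (Metric.diam (U : Set X) ^ s) }


section Aux

namespace BMData

variable (C : BMData)

lemma one_lt_M : 1 < C.M := C.one_lt_cols

lemma cols_nonempty : C.cols.Nonempty :=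
  Finset.card_pos.mp (lt_trans one_pos C.one_lt_cols)

lemma N_pos : 0 < C.N := Finset.card_pos.mpr C.A_nonempty

lemma colCount_pos {j : Fin C.m} (hj : j ∈ C.cols) : 0 < C.colCount j := by
  obtain ⟨p, hp, rfl⟩ := Finset.mem_image.mp hj
  exact Finset.card_pos.mpr ⟨p, Finset.mem_filter.mpr ⟨hp, rfl⟩⟩

lemma sum_colCount : ∑ j ∈ C.cols, C.colCount j = C.N :=
  (Finset.card_eq_sum_card_fiberwise (fun p hp => Finset.mem_image_of_mem _ hp)).symm

lemma MR_pos : (0 : ℝ) < (C.M : ℝ) := by exact_mod_cast lt_trans one_pos C.one_lt_M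

lemma NR_pos : (0 : ℝ) < (C.N : ℝ) := by exact_mod_cast C.N_pos

lemma colCountR_pos {j : Fin C.m} (hj : j ∈ C.cols) : (0 : ℝ) < (C.colCount j : ℝ) := by
  exact_mod_cast C.colCount_pos hj

lemma sum_colCountR : ∑ j ∈ C.cols, ((C.colCount j : ℝ) / (C.N : ℝ)) = 1 := by
  rw [← Finset.sum_div]
  rw [show ∑ j ∈ C.cols, ((C.colCount j : ℝ)) = (C.N : ℝ) by exact_mod_cast C.sum_colCount]
  exact div_self C.NR_pos.ne'

lemma sum_invM : ∑ _j ∈ C.cols, (1 / (C.M : ℝ)) = 1 := by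
  rw [Finset.sum_const]
  rw [show C.cols.card = C.M from rfl]
  rw [nsmul_eq_mul, mul_one_div]
  exact div_self C.MR_pos.ne'

/-- key per-term identity -/
lemma mul_log_div (x c : ℝ) (hc : c ≠ 0) :
    x * Real.log (x / c) = x * Real.log x - Real.log c * x := by
  rcases eq_or_ne x 0 with rfl | hx
  · simp
  · rw [Real.log_div hx hc]; ring

/-- per-term Gibbs bound -/
lemma sub_le_mul_log_div {x c : ℝ} (hx : 0 ≤ x) (hc : 0 < c) :
    x - c ≤ x * Real.log (x / c) := by
  rcases hx.eq_or_lt with rfl | hx'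
  · simp [hc.le]
  · have h := Real.log_le_sub_one_of_pos (show 0 < c / x by positivity)
    have hlog : Real.log (c / x) = - Real.log (x / c) := by
      rw [← Real.log_inv]
      congr 1
      field_simp
    have h2 : x * Real.log (c / x) ≤ x * (c / x - 1) := by
      exact mul_le_mul_of_nonneg_left h hx'.le
    have h3 : x * (c / x - 1) = c - x := by field_simp
    rw [hlog, mul_neg] at h2
    linarith

/-- the (negated) entropy -/
def ent (p : Fin C.m → ℝ) : ℝ := ∑ j ∈ C.cols, p j * Real.log (p j)

lemma relEntP_eq {p : Fin C.m → ℝ} (hp : ∑ j ∈ C.cols, p j = 1) :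
    C.relEntP p = C.ent p - C.colAvg p + Real.log C.N := by
  unfold relEntP ent colAvg
  have key : ∀ j ∈ C.cols,
      p j * Real.log (p j / ((C.colCount j : ℝ) / (C.N : ℝ))) =
      (p j * Real.log (p j) - p j * Real.log (C.colCount j)) + Real.log C.N * p j := by
    intro j hj
    rw [mul_log_div (p j) _ (div_ne_zero (C.colCountR_pos hj).ne' C.NR_pos.ne'),
      Real.log_div (C.colCountR_pos hj).ne' C.NR_pos.ne']
    ring
  rw [Finset.sum_congr rfl key, Finset.sum_add_distrib, Finset.sum_sub_distrib,
    ← Finset.mul_sum, hp]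
  ring

lemma relEntQ_eq {p : Fin C.m → ℝ} (hp : ∑ j ∈ C.cols, p j = 1) :
    C.relEntQ p = C.ent p + Real.log C.M := by
  unfold relEntQ ent
  have key : ∀ j ∈ C.cols,
      p j * Real.log (p j / (1 / (C.M : ℝ))) =
      p j * Real.log (p j) + Real.log C.M * p j := by
    intro j hj
    rw [mul_log_div (p j) _ (one_div_pos.mpr C.MR_pos).ne', one_div, Real.log_inv]
    ring
  rw [Finset.sum_congr rfl key, Finset.sum_add_distrib, ← Finset.mul_sum, hp]
  ring

lemma relEnt_diff {p : Fin C.m → ℝ} (hp : ∑ j ∈ C.cols, p j = 1) :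
    C.relEntP p = C.relEntQ p + Real.log ((C.N : ℝ) / (C.M : ℝ)) - C.colAvg p := by
  rw [C.relEntP_eq hp, C.relEntQ_eq hp, Real.log_div C.NR_pos.ne' C.MR_pos.ne']
  ring

/-- Gibbs inequality for P -/
lemma relEntP_nonneg {p : Fin C.m → ℝ} (hp : C.IsProbVec p) : 0 ≤ C.relEntP p := by
  have key : ∀ j ∈ C.cols, p j - (C.colCount j : ℝ) / (C.N : ℝ) ≤
      p j * Real.log (p j / ((C.colCount j : ℝ) / (C.N : ℝ))) := fun j hj =>
    sub_le_mul_log_div (hp.1 j) (div_pos (C.colCountR_pos hj) C.NR_pos)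
  have h := Finset.sum_le_sum key
  rw [Finset.sum_sub_distrib, hp.2.2, C.sum_colCountR] at h
  simpa [relEntP] using h

/-- Gibbs inequality for Q -/
lemma relEntQ_nonneg {p : Fin C.m → ℝ} (hp : C.IsProbVec p) : 0 ≤ C.relEntQ p := by
  have key : ∀ j ∈ C.cols, p j - 1 / (C.M : ℝ) ≤
      p j * Real.log (p j / (1 / (C.M : ℝ)))  := fun j hj =>
    sub_le_mul_log_div (hp.1 j) (one_div_pos.mpr C.MR_pos)
  have h := Finset.sum_le_sum key
  rw [Finset.sum_sub_distrib, hp.2.2, C.sum_invM] at h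
  simpa [relEntQ] using h

/-- the reference vector P -/
def Pvec : Fin C.m → ℝ := fun j => if j ∈ C.cols then (C.colCount j : ℝ) / (C.N : ℝ) else 0

/-- the reference vector Q -/
def Qvec : Fin C.m → ℝ := fun j => if j ∈ C.cols then 1 / (C.M : ℝ) else 0

lemma isProbVec_Pvec : C.IsProbVec C.Pvec := by
  refine ⟨fun j => ?_, fun j hj => if_neg hj, ?_⟩
  · unfold Pvec; split
    · positivity
    · exact le_rfl
  · have hterm : ∀ j ∈ C.cols, C.Pvec j = (C.colCount j : ℝ) / (C.N : ℝ) :=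
      fun j hj => if_pos hj
    rw [Finset.sum_congr rfl hterm]
    exact C.sum_colCountR

lemma isProbVec_Qvec : C.IsProbVec C.Qvec := by
  refine ⟨fun j => ?_, fun j hj => if_neg hj, ?_⟩
  · unfold Qvec; split
    · positivity
    · exact le_rfl
  · have hterm : ∀ j ∈ C.cols, C.Qvec j = 1 / (C.M : ℝ) := fun j hj => if_pos hj
    rw [Finset.sum_congr rfl hterm]
    exact C.sum_invM

lemma colAvg_Pvec : C.colAvg C.Pvec = C.tUp := by
  unfold colAvg tUp
  refine Finset.sum_congr rfl fun j hj => ?_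
  rw [show C.Pvec j = (C.colCount j : ℝ) / (C.N : ℝ) from if_pos hj]

lemma colAvg_Qvec : C.colAvg C.Qvec = C.tLow := by
  unfold colAvg tLow
  rw [Finset.mul_sum]
  refine Finset.sum_congr rfl fun j hj => ?_
  rw [show C.Qvec j = 1 / (C.M : ℝ) from if_pos hj]

lemma relEntP_Pvec : C.relEntP C.Pvec = 0 := by
  unfold relEntP
  apply Finset.sum_eq_zero
  intro j hj
  rw [show C.Pvec j = (C.colCount j : ℝ) / (C.N : ℝ) from if_pos hj,
    div_self (div_ne_zero (C.colCountR_pos hj).ne' C.NR_pos.ne'), Real.log_one, mul_zero]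

lemma relEntQ_Qvec : C.relEntQ C.Qvec = 0 := by
  unfold relEntQ
  apply Finset.sum_eq_zero
  intro j hj
  rw [show C.Qvec j = 1 / (C.M : ℝ) from if_pos hj,
    div_self (one_div_pos.mpr C.MR_pos).ne', Real.log_one, mul_zero]

lemma colAvg_combo (x y : Fin C.m → ℝ) (a b : ℝ) :
    C.colAvg (fun j => a * x j + b * y j) = a * C.colAvg x + b * C.colAvg y := by
  unfold colAvg
  rw [Finset.mul_sum, Finset.mul_sum, ← Finset.sum_add_distrib]
  exact Finset.sum_congr rfl (fun j hj => by ring)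

lemma isProbVec_combo {x y : Fin C.m → ℝ} (hx : C.IsProbVec x) (hy : C.IsProbVec y)
    {a b : ℝ} (ha : 0 ≤ a) (hb : 0 ≤ b) (hab : a + b = 1) :
    C.IsProbVec (fun j => a * x j + b * y j) := by
  refine ⟨fun j => by have := hx.1 j; have := hy.1 j; positivity, fun j hj => ?_, ?_⟩
  · have h1 := hx.2.1 j hj
    have h2 := hy.2.1 j hj
    simp only []
    rw [h1, h2]
    ring
  · rw [Finset.sum_add_distrib, ← Finset.mul_sum, ← Finset.mul_sum, hx.2.2, hy.2.2]
    simpa using hab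

lemma ent_combo_lt {x y : Fin C.m → ℝ} (hx : C.IsProbVec x) (hy : C.IsProbVec y)
    (hne : x ≠ y) {a b : ℝ} (ha : 0 < a) (hb : 0 < b) (hab : a + b = 1) :
    C.ent (fun j => a * x j + b * y j) < a * C.ent x + b * C.ent y := by
  obtain ⟨j0, hj0⟩ : ∃ j, x j ≠ y j := Function.ne_iff.mp hne
  have hj0c : j0 ∈ C.cols := by
    by_contra h
    exact hj0 (by rw [hx.2.1 j0 h, hy.2.1 j0 h])
  unfold ent
  rw [show a * (∑ j ∈ C.cols, x j * Real.log (x j)) + b * (∑ j ∈ C.cols, y j * Real.log (y j))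
      = ∑ j ∈ C.cols, (a * (x j * Real.log (x j)) + b * (y j * Real.log (y j))) by
    rw [Finset.mul_sum, Finset.mul_sum, ← Finset.sum_add_distrib]]
  apply Finset.sum_lt_sum
  · intro j hj
    have := Real.convexOn_mul_log.2 (Set.mem_Ici.mpr (hx.1 j)) (Set.mem_Ici.mpr (hy.1 j))
      ha.le hb.le hab
    simpa [smul_eq_mul] using this
  · refine ⟨j0, hj0c, ?_⟩
    have := Real.strictConvexOn_mul_log.2 (Set.mem_Ici.mpr (hx.1 j0)) (Set.mem_Ici.mpr (hy.1 j0))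
      hj0 ha hb hab
    simpa [smul_eq_mul] using this

lemma relEntP_combo_lt {x y : Fin C.m → ℝ} (hx : C.IsProbVec x) (hy : C.IsProbVec y)
    (hne : x ≠ y) {a b : ℝ} (ha : 0 < a) (hb : 0 < b) (hab : a + b = 1) :
    C.relEntP (fun j => a * x j + b * y j) < a * C.relEntP x + b * C.relEntP y := by
  have hc := C.isProbVec_combo hx hy ha.le hb.le hab
  rw [C.relEntP_eq hc.2.2, C.relEntP_eq hx.2.2, C.relEntP_eq hy.2.2, C.colAvg_combo]
  have h1 := C.ent_combo_lt hx hy hne ha hb hab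
  have hL : a * Real.log C.N + b * Real.log C.N = Real.log C.N := by
    rw [← add_mul, hab, one_mul]
  linarith [h1, hL]

lemma relEntQ_combo_lt {x y : Fin C.m → ℝ} (hx : C.IsProbVec x) (hy : C.IsProbVec y)
    (hne : x ≠ y) {a b : ℝ} (ha : 0 < a) (hb : 0 < b) (hab : a + b = 1) :
    C.relEntQ (fun j => a * x j + b * y j) < a * C.relEntQ x + b * C.relEntQ y := by
  have hc := C.isProbVec_combo hx hy ha.le hb.le hab
  rw [C.relEntQ_eq hc.2.2, C.relEntQ_eq hx.2.2, C.relEntQ_eq hy.2.2]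
  have h1 := C.ent_combo_lt hx hy hne ha hb hab
  have hL : a * Real.log C.M + b * Real.log C.M = Real.log C.M := by
    rw [← add_mul, hab, one_mul]
  linarith [h1, hL]

lemma continuous_relEntP : Continuous C.relEntP := by
  have hrw : C.relEntP = fun p => ∑ j ∈ C.cols,
      (p j * Real.log (p j) - Real.log ((C.colCount j : ℝ) / (C.N : ℝ)) * p j) := by
    funext p
    exact Finset.sum_congr rfl fun j hj =>
      mul_log_div (p j) _ (div_ne_zero (C.colCountR_pos hj).ne' C.NR_pos.ne')
  rw [hrw]
  exact continuous_finset_sum _ fun j _ =>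
    ((Real.continuous_mul_log.comp (continuous_apply j))).sub
      (continuous_const.mul (continuous_apply j))

lemma continuous_relEntQ : Continuous C.relEntQ := by
  have hrw : C.relEntQ = fun p => ∑ j ∈ C.cols,
      (p j * Real.log (p j) - Real.log (1 / (C.M : ℝ)) * p j) := by
    funext p
    exact Finset.sum_congr rfl fun j hj =>
      mul_log_div (p j) _ (one_div_pos.mpr C.MR_pos).ne'
  rw [hrw]
  exact continuous_finset_sum _ fun j _ =>
    ((Real.continuous_mul_log.comp (continuous_apply j))).sub
      (continuous_const.mul (continuous_apply j))

lemma continuous_colAvg : Continuous C.colAvg := by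
  unfold colAvg
  exact continuous_finset_sum _ fun j _ => (continuous_apply j).mul continuous_const

lemma isCompact_feasible (t : ℝ) (φ : (Fin C.m → ℝ) → ℝ) (hφ : Continuous φ) :
    IsCompact {p : Fin C.m → ℝ | C.IsProbVec p ∧ φ p ≤ t} := by
  have hcl : IsClosed {p : Fin C.m → ℝ | C.IsProbVec p ∧ φ p ≤ t} := by
    have hrw : {p : Fin C.m → ℝ | C.IsProbVec p ∧ φ p ≤ t} =
        {p : Fin C.m → ℝ | ∀ j, 0 ≤ p j} ∩ ({p | ∀ j, j ∉ C.cols → p j = 0} ∩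
          ({p | ∑ j ∈ C.cols, p j = 1} ∩ {p | φ p ≤ t})) := by
      ext p
      constructor
      · rintro ⟨⟨h1, h2, h3⟩, h4⟩; exact ⟨h1, h2, h3, h4⟩
      · rintro ⟨h1, h2, h3, h4⟩; exact ⟨⟨h1, h2, h3⟩, h4⟩
    rw [hrw]
    refine IsClosed.inter ?_ (IsClosed.inter ?_ (IsClosed.inter ?_ ?_))
    · rw [show {p : Fin C.m → ℝ | ∀ j, 0 ≤ p j} = ⋂ j, {p : Fin C.m → ℝ | 0 ≤ p j} by
        ext p; simp]
      exact isClosed_iInter fun j => isClosed_le continuous_const (continuous_apply j)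
    · rw [show {p : Fin C.m → ℝ | ∀ j, j ∉ C.cols → p j = 0} =
          ⋂ j, ⋂ (_ : j ∉ C.cols), {p : Fin C.m → ℝ | p j = 0} by ext p; simp]
      exact isClosed_iInter fun j => isClosed_iInter fun _ =>
        isClosed_eq (continuous_apply j) continuous_const
    · exact isClosed_eq (continuous_finset_sum _ fun j _ => continuous_apply j) continuous_const
    · exact isClosed_le hφ continuous_const
  have hsub : {p : Fin C.m → ℝ | C.IsProbVec p ∧ φ p ≤ t} ⊆
      Set.Icc (0 : Fin C.m → ℝ) 1 := by
    rintro p ⟨⟨h1, h2, h3⟩, _⟩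
    refine ⟨fun j => h1 j, fun j => ?_⟩
    by_cases hj : j ∈ C.cols
    · calc p j ≤ ∑ i ∈ C.cols, p i := Finset.single_le_sum (fun i _ => h1 i) hj
        _ = 1 := h3
    · rw [h2 j hj]; exact zero_le_one
  exact IsCompact.of_isClosed_subset isCompact_Icc hcl hsub

end BMData

end Aux

/-- **Lemma 3.2.** For `t ∈ (t̲, t̄)`: the infimum of `H(p‖P)` over `p ∈ G_t` and the
infimum of `H(q‖Q)` over `q ∈ F_t` are attained; every minimizer of either problem lies
in `E_t`; and `inf_{G_t} H(·‖P) = inf_{F_t} H(·‖Q) + log(N/M) − t`. -/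
theorem statement13 (C : BMData) (hnu : C.NonUniform) (t : ℝ)
    (ht : t ∈ Set.Ioo C.tLow C.tUp) :
    (∃ p : Fin C.m → ℝ, C.IsProbVec p ∧ C.colAvg p ≤ t ∧
      C.relEntP p = sInf {x : ℝ | ∃ p' : Fin C.m → ℝ,
        C.IsProbVec p' ∧ C.colAvg p' ≤ t ∧ x = C.relEntP p'}) ∧
    (∃ q : Fin C.m → ℝ, C.IsProbVec q ∧ t ≤ C.colAvg q ∧
      C.relEntQ q = sInf {x : ℝ | ∃ q' : Fin C.m → ℝ,
        C.IsProbVec q' ∧ t ≤ C.colAvg q' ∧ x = C.relEntQ q'}) ∧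
    (∀ p : Fin C.m → ℝ, C.IsProbVec p → C.colAvg p ≤ t →
      C.relEntP p = sInf {x : ℝ | ∃ p' : Fin C.m → ℝ,
        C.IsProbVec p' ∧ C.colAvg p' ≤ t ∧ x = C.relEntP p'} →
      C.colAvg p = t) ∧
    (∀ q : Fin C.m → ℝ, C.IsProbVec q → t ≤ C.colAvg q →
      C.relEntQ q = sInf {x : ℝ | ∃ q' : Fin C.m → ℝ,
        C.IsProbVec q' ∧ t ≤ C.colAvg q' ∧ x = C.relEntQ q'} →
      C.colAvg q = t) ∧
    sInf {x : ℝ | ∃ p' : Fin C.m → ℝ,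
        C.IsProbVec p' ∧ C.colAvg p' ≤ t ∧ x = C.relEntP p'}
      = sInf {x : ℝ | ∃ q' : Fin C.m → ℝ,
          C.IsProbVec q' ∧ t ≤ C.colAvg q' ∧ x = C.relEntQ q'}
        + Real.log ((C.N : ℝ) / (C.M : ℝ)) - t := by
  
  obtain ⟨ht1, ht2⟩ := ht
  -- abbreviations
  set SP := {x : ℝ | ∃ p' : Fin C.m → ℝ,
    C.IsProbVec p' ∧ C.colAvg p' ≤ t ∧ x = C.relEntP p'} with hSPdef
  set SQ := {x : ℝ | ∃ q' : Fin C.m → ℝ,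
    C.IsProbVec q' ∧ t ≤ C.colAvg q' ∧ x = C.relEntQ q'} with hSQdef
  have hSPbdd : BddBelow SP := ⟨0, by rintro x ⟨p', hp', _, rfl⟩; exact C.relEntP_nonneg hp'⟩
  have hSQbdd : BddBelow SQ := ⟨0, by rintro x ⟨q', hq', _, rfl⟩; exact C.relEntQ_nonneg hq'⟩
  -- Part 3 (as a hypothesis): any feasible p with colAvg p < t is not a minimizer
  have part3 : ∀ p : Fin C.m → ℝ, C.IsProbVec p → C.colAvg p ≤ t →
      C.relEntP p = sInf SP → C.colAvg p = t := by
    intro p hp hple hpval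
    by_contra hne
    have ha : C.colAvg p < t := lt_of_le_of_ne hple hne
    have haU : C.colAvg p < C.tUp := lt_trans ha ht2
    set s : ℝ := (t - C.colAvg p) / (C.tUp - C.colAvg p) with hs
    have hs0 : 0 < s := div_pos (by linarith) (by linarith)
    have hs1 : s < 1 := (div_lt_one (by linarith)).mpr (by linarith)
    have hPne : C.Pvec ≠ p := by
      intro h
      rw [← h, C.colAvg_Pvec] at haU
      exact lt_irrefl _ haU
    set p' : Fin C.m → ℝ := fun j => s * C.Pvec j + (1 - s) * p j with hp'def
    have hp' : C.IsProbVec p' :=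
      C.isProbVec_combo C.isProbVec_Pvec hp hs0.le (by linarith) (by ring)
    have hca : C.colAvg p' = t := by
      rw [hp'def, C.colAvg_combo, C.colAvg_Pvec]
      have hmul : s * (C.tUp - C.colAvg p) = t - C.colAvg p :=
        div_mul_cancel₀ _ (by intro h; rw [sub_eq_zero] at h; linarith :
          C.tUp - C.colAvg p ≠ 0)
      linear_combination hmul
    have hlt : C.relEntP p' < C.relEntP p := by
      have h1 := C.relEntP_combo_lt C.isProbVec_Pvec hp hPne hs0 (by linarith : (0:ℝ) < 1 - s)
        (by ring)
      rw [C.relEntP_Pvec] at h1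
      have h2 := C.relEntP_nonneg hp
      nlinarith [h1, h2, mul_nonneg hs0.le h2]
    have hmem : C.relEntP p' ∈ SP := ⟨p', hp', le_of_eq hca, rfl⟩
    have := csInf_le hSPbdd hmem
    rw [← hpval] at this
    linarith
  -- Part 4
  have part4 : ∀ q : Fin C.m → ℝ, C.IsProbVec q → t ≤ C.colAvg q →
      C.relEntQ q = sInf SQ → C.colAvg q = t := by
    intro q hq hqle hqval
    by_contra hne
    have ha : t < C.colAvg q := lt_of_le_of_ne hqle (Ne.symm hne)
    have haL : C.tLow < C.colAvg q := lt_trans ht1 ha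
    set s : ℝ := (C.colAvg q - t) / (C.colAvg q - C.tLow) with hs
    have hs0 : 0 < s := div_pos (by linarith) (by linarith)
    have hs1 : s < 1 := (div_lt_one (by linarith)).mpr (by linarith)
    have hQne : C.Qvec ≠ q := by
      intro h
      rw [← h, C.colAvg_Qvec] at haL
      exact lt_irrefl _ haL
    set q' : Fin C.m → ℝ := fun j => s * C.Qvec j + (1 - s) * q j with hq'def
    have hq' : C.IsProbVec q' :=
      C.isProbVec_combo C.isProbVec_Qvec hq hs0.le (by linarith) (by ring)
    have hca : C.colAvg q' = t := by
      rw [hq'def, C.colAvg_combo, C.colAvg_Qvec]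
      have hmul : s * (C.colAvg q - C.tLow) = C.colAvg q - t :=
        div_mul_cancel₀ _ (by intro h; rw [sub_eq_zero] at h; linarith :
          C.colAvg q - C.tLow ≠ 0)
      linear_combination -hmul
    have hlt : C.relEntQ q' < C.relEntQ q := by
      have h1 := C.relEntQ_combo_lt C.isProbVec_Qvec hq hQne hs0 (by linarith : (0:ℝ) < 1 - s)
        (by ring)
      rw [C.relEntQ_Qvec] at h1
      have h2 := C.relEntQ_nonneg hq
      nlinarith [h1, h2, mul_nonneg hs0.le h2]
    have hmem : C.relEntQ q' ∈ SQ := ⟨q', hq', le_of_eq hca.symm, rfl⟩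
    have := csInf_le hSQbdd hmem
    rw [← hqval] at this
    linarith
  -- Part 1: existence of a minimizer of relEntP on G_t
  have hKP := C.isCompact_feasible t C.colAvg C.continuous_colAvg
  have hneP : {p : Fin C.m → ℝ | C.IsProbVec p ∧ C.colAvg p ≤ t}.Nonempty :=
    ⟨C.Qvec, C.isProbVec_Qvec, by rw [C.colAvg_Qvec]; linarith⟩
  obtain ⟨p0, hp0mem, hp0min⟩ :=
    hKP.exists_isMinOn hneP C.continuous_relEntP.continuousOn
  have hp0val : C.relEntP p0 = sInf SP := by
    refine le_antisymm (le_csInf ⟨_, ⟨p0, hp0mem.1, hp0mem.2, rfl⟩⟩ ?_)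
      (csInf_le hSPbdd ⟨p0, hp0mem.1, hp0mem.2, rfl⟩)
    rintro x ⟨p', h1, h2, rfl⟩
    exact isMinOn_iff.mp hp0min p' ⟨h1, h2⟩
  -- Part 2: existence of a minimizer of relEntQ on F_t
  have hKQ' := C.isCompact_feasible (-t) (fun p => -C.colAvg p) C.continuous_colAvg.neg
  have hKQ : IsCompact {q : Fin C.m → ℝ | C.IsProbVec q ∧ t ≤ C.colAvg q} := by
    have hset : {q : Fin C.m → ℝ | C.IsProbVec q ∧ t ≤ C.colAvg q} =
        {q : Fin C.m → ℝ | C.IsProbVec q ∧ (fun p => -C.colAvg p) q ≤ -t} := by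
      ext q
      constructor <;> rintro ⟨h1, h2⟩ <;> exact ⟨h1, by simp only [] at h2 ⊢; linarith⟩
    rw [hset]
    exact hKQ'
  have hneQ : {q : Fin C.m → ℝ | C.IsProbVec q ∧ t ≤ C.colAvg q}.Nonempty :=
    ⟨C.Pvec, C.isProbVec_Pvec, by rw [C.colAvg_Pvec]; linarith⟩
  obtain ⟨q0, hq0mem, hq0min⟩ :=
    hKQ.exists_isMinOn hneQ C.continuous_relEntQ.continuousOn
  have hq0val : C.relEntQ q0 = sInf SQ := by
    refine le_antisymm (le_csInf ⟨_, ⟨q0, hq0mem.1, hq0mem.2, rfl⟩⟩ ?_)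
      (csInf_le hSQbdd ⟨q0, hq0mem.1, hq0mem.2, rfl⟩)
    rintro x ⟨q', h1, h2, rfl⟩
    exact isMinOn_iff.mp hq0min q' ⟨h1, h2⟩
  refine ⟨⟨p0, hp0mem.1, hp0mem.2, hp0val⟩, ⟨q0, hq0mem.1, hq0mem.2, hq0val⟩,
    part3, part4, ?_⟩
  -- Part 5
  have hp0t : C.colAvg p0 = t := part3 p0 hp0mem.1 hp0mem.2 hp0val
  have hq0t : C.colAvg q0 = t := part4 q0 hq0mem.1 hq0mem.2 hq0val
  have hdp := C.relEnt_diff hp0mem.1.2.2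
  have hdq := C.relEnt_diff hq0mem.1.2.2
  -- sInf SQ ≤ relEntQ p0
  have h1 : sInf SQ ≤ C.relEntQ p0 :=
    csInf_le hSQbdd ⟨p0, hp0mem.1, le_of_eq hp0t.symm, rfl⟩
  -- sInf SP ≤ relEntP q0
  have h2 : sInf SP ≤ C.relEntP q0 :=
    csInf_le hSPbdd ⟨q0, hq0mem.1, le_of_eq hq0t, rfl⟩
  rw [hp0t] at hdp
  rw [hq0t] at hdq
  rw [← hp0val, ← hq0val] at *
  linarith [hdp, hdq, h1, h2]
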